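/- arXiv:2006.10264 — 4 statements merged into one kernel-verified Lean document; each statement's English description precedes it below -/
import Mathlib

section
/- Let α ≥ 2 be an even natural number, let B ≥ 0 and c, d, x₀ be real numbers, let u < v be reals, and set w = (u + v)/2. Then ∫_u^v (|x − w| − (v − u)/4)·(c·x + d + B·(x − x₀)^α) dx ≥ (B·α/((α + 1)(α + 2)))·((v − u)/2)^{α+2}. -/
open intervalIntegral

lemma poly_integral (a b w : ℝ) (k : ℕ) :
    ∫ x in a..b, (x - w) ^ k = ((b - w) ^ (k+1) - (a - w) ^ (k+1)) / (k+1) := by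
  rw [intervalIntegral.integral_comp_sub_right (fun y => y ^ k) w, integral_pow]

lemma abs_integral (u v w : ℝ) (hu : u ≤ w) (hv : w ≤ v) (k : ℕ) :
    ∫ x in u..v, |x - w| * (x - w) ^ k
      = ((u - w) ^ (k+2) + (v - w) ^ (k+2)) / (k+2) := by
  have hc : ∀ a b : ℝ, IntervalIntegrable (fun x => |x - w| * (x - w) ^ k) MeasureTheory.volume a b :=
    fun a b => Continuous.intervalIntegrable (by fun_prop) a b
  rw [← intervalIntegral.integral_add_adjacent_intervals (hc u w) (hc w v)]
  have h1 : ∫ x in u..w, |x - w| * (x - w) ^ k = ∫ x in u..w, -(x - w) ^ (k+1) := by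
    apply intervalIntegral.integral_congr
    intro x hx
    rw [Set.uIcc_of_le hu] at hx
    simp only
    rw [abs_of_nonpos (by linarith [hx.2])]
    ring
  have h2 : ∫ x in w..v, |x - w| * (x - w) ^ k = ∫ x in w..v, (x - w) ^ (k+1) := by
    apply intervalIntegral.integral_congr
    intro x hx
    rw [Set.uIcc_of_le hv] at hx
    simp only
    rw [abs_of_nonneg (by linarith [hx.1])]
    ring
  rw [h1, h2, intervalIntegral.integral_neg, poly_integral, poly_integral]
  have : (w - w : ℝ) ^ (k + 1 + 1) = 0 := by
    rw [sub_self]; exact zero_pow (by omega)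
  rw [this]
  push_cast
  ring

lemma Ik (u v w : ℝ) (hu : u ≤ w) (hv : w ≤ v) (k : ℕ) :
    ∫ x in u..v, (|x - w| - (v - u) / 4) * (x - w) ^ k
      = ((u - w) ^ (k+2) + (v - w) ^ (k+2)) / (k+2)
        - (v - u) / 4 * (((v - w) ^ (k+1) - (u - w) ^ (k+1)) / (k+1)) := by
  have e : ∀ x : ℝ, (|x - w| - (v - u) / 4) * (x - w) ^ k
      = |x - w| * (x - w) ^ k - (v - u) / 4 * (x - w) ^ k := fun x => by ring
  simp only [e]
  rw [intervalIntegral.integral_sub (Continuous.intervalIntegrable (by fun_prop) u v)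
    (Continuous.intervalIntegrable (by fun_prop) u v),
    abs_integral u v w hu hv, intervalIntegral.integral_const_mul, poly_integral]

set_option maxHeartbeats 1000000 in
/-- Lower bound for the kernel integral against an affine function plus an even-power
drift: `∫_u^v (|x-w| - (v-u)/4)(c x + d + B (x - x₀)^α) dx
  ≥ (B α /((α+1)(α+2))) ((v-u)/2)^{α+2}`. -/
theorem kernel_integral_lower_bound
    (α : ℕ) (hα : 2 ≤ α) (heven : Even α) (B : ℝ) (hB : 0 ≤ B)
    (c d x₀ u v : ℝ) (huv : u < v) (w : ℝ) (hw : w = (u + v) / 2) :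
    (B * (α : ℝ) / (((α : ℝ) + 1) * ((α : ℝ) + 2))) * ((v - u) / 2) ^ (α + 2) ≤
      ∫ x in u..v, (|x - w| - (v - u) / 4) * (c * x + d + B * (x - x₀) ^ α) := by
  set h : ℝ := (v - u) / 2 with hh
  have hh0 : 0 < h := by simp [hh]; linarith
  have hu : u ≤ w := by rw [hw]; linarith
  have hv : w ≤ v := by rw [hw]; linarith
  have huw : u - w = -h := by rw [hw, hh]; ring
  have hvw : v - w = h := by rw [hw, hh]; ring
  -- closed form for I k
  have Ieven : ∀ k : ℕ, Even k →
      (∫ x in u..v, (|x - w| - (v - u) / 4) * (x - w) ^ k)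
        = h ^ (k+2) * k / (((k:ℝ)+1) * ((k:ℝ)+2)) := by
    intro k hk
    obtain ⟨m, rfl⟩ := hk
    have e2 : Even (m + m + 2) := ⟨m + 1, by ring⟩
    have o1 : Odd (m + m + 1) := ⟨m, by ring⟩
    rw [Ik u v w hu hv, huw, hvw, e2.neg_pow, o1.neg_pow]
    have h1 : ((m:ℝ) + m + 1) ≠ 0 := by positivity
    have h2 : ((m:ℝ) + m + 2) ≠ 0 := by positivity
    have hvu : v - u = 2 * h := by rw [hh]; ring
    rw [hvu]
    push_cast
    field_simp
    ring
  have Iodd : ∀ k : ℕ, Odd k →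
      (∫ x in u..v, (|x - w| - (v - u) / 4) * (x - w) ^ k) = 0 := by
    intro k hk
    obtain ⟨m, rfl⟩ := hk
    have o2 : Odd (2 * m + 1 + 2) := ⟨m + 1, by ring⟩
    have e1 : Even (2 * m + 1 + 1) := ⟨m + 1, by ring⟩
    rw [Ik u v w hu hv, huw, hvw, o2.neg_pow, e1.neg_pow]
    ring
  -- pointwise expansion
  have key : ∀ x : ℝ, (|x - w| - (v - u) / 4) * (c * x + d + B * (x - x₀) ^ α)
      = (c * ((|x - w| - (v - u) / 4) * (x - w) ^ 1)
        + (c * w + d) * ((|x - w| - (v - u) / 4) * (x - w) ^ 0))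
        + ∑ k ∈ Finset.range (α + 1),
            (B * (w - x₀) ^ (α - k) * (α.choose k : ℝ))
              * ((|x - w| - (v - u) / 4) * (x - w) ^ k) := by
    intro x
    have hp : (x - x₀) ^ α
        = ∑ k ∈ Finset.range (α + 1), (x - w) ^ k * (w - x₀) ^ (α - k) * (α.choose k : ℝ) := by
      rw [← add_pow]; ring_nf
    have h2 : (|x - w| - (v - u) / 4)
          * (B * ∑ k ∈ Finset.range (α + 1), (x - w) ^ k * (w - x₀) ^ (α - k) * (α.choose k : ℝ))
        = ∑ k ∈ Finset.range (α + 1),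
            (B * (w - x₀) ^ (α - k) * (α.choose k : ℝ))
              * ((|x - w| - (v - u) / 4) * (x - w) ^ k) := by
      rw [Finset.mul_sum, Finset.mul_sum]
      exact Finset.sum_congr rfl fun k _ => by ring
    rw [hp, ← h2]
    ring
  simp only [key]
  have hFi : ∀ (k : ℕ) (C : ℝ),
      IntervalIntegrable (fun x => C * ((|x - w| - (v - u) / 4) * (x - w) ^ k))
        MeasureTheory.volume u v :=
    fun k C => Continuous.intervalIntegrable (by fun_prop) u v
  have split1 : (∫ x in u..v,
        ((c * ((|x - w| - (v - u) / 4) * (x - w) ^ 1)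
          + (c * w + d) * ((|x - w| - (v - u) / 4) * (x - w) ^ 0))
        + ∑ k ∈ Finset.range (α + 1),
            (B * (w - x₀) ^ (α - k) * (α.choose k : ℝ))
              * ((|x - w| - (v - u) / 4) * (x - w) ^ k)))
      = (∫ x in u..v, (c * ((|x - w| - (v - u) / 4) * (x - w) ^ 1)
          + (c * w + d) * ((|x - w| - (v - u) / 4) * (x - w) ^ 0)))
        + ∫ x in u..v, ∑ k ∈ Finset.range (α + 1),
            (B * (w - x₀) ^ (α - k) * (α.choose k : ℝ))
              * ((|x - w| - (v - u) / 4) * (x - w) ^ k) :=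
    intervalIntegral.integral_add ((hFi 1 c).add (hFi 0 (c*w+d)))
      (Continuous.intervalIntegrable (by fun_prop) u v)
  have split2 : (∫ x in u..v, (c * ((|x - w| - (v - u) / 4) * (x - w) ^ 1)
          + (c * w + d) * ((|x - w| - (v - u) / 4) * (x - w) ^ 0)))
      = (∫ x in u..v, c * ((|x - w| - (v - u) / 4) * (x - w) ^ 1))
        + ∫ x in u..v, (c * w + d) * ((|x - w| - (v - u) / 4) * (x - w) ^ 0) :=
    intervalIntegral.integral_add (hFi 1 c) (hFi 0 (c*w+d))
  have split3 : (∫ x in u..v, ∑ k ∈ Finset.range (α + 1),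
            (B * (w - x₀) ^ (α - k) * (α.choose k : ℝ))
              * ((|x - w| - (v - u) / 4) * (x - w) ^ k))
      = ∑ k ∈ Finset.range (α + 1), ∫ x in u..v,
            (B * (w - x₀) ^ (α - k) * (α.choose k : ℝ))
              * ((|x - w| - (v - u) / 4) * (x - w) ^ k) :=
    intervalIntegral.integral_finset_sum fun k _ => hFi k _
  rw [split1, split2, split3]
  simp only [intervalIntegral.integral_const_mul]
  rw [Iodd 1 odd_one, Ieven 0 Even.zero]
  have hsum : B * (α : ℝ) / (((α : ℝ) + 1) * ((α : ℝ) + 2)) * h ^ (α + 2)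
      ≤ ∑ k ∈ Finset.range (α + 1),
          (B * (w - x₀) ^ (α - k) * (α.choose k : ℝ))
            * ∫ x in u..v, (|x - w| - (v - u) / 4) * (x - w) ^ k := by
    have hmem : α ∈ Finset.range (α + 1) := Finset.self_mem_range_succ α
    have hnn : ∀ k ∈ Finset.range (α + 1),
        0 ≤ (B * (w - x₀) ^ (α - k) * (α.choose k : ℝ))
            * ∫ x in u..v, (|x - w| - (v - u) / 4) * (x - w) ^ k := by
      intro k hk
      rcases Nat.even_or_odd k with hke | hko
      · rw [Ieven k hke]
        have hkα : k ≤ α := Nat.lt_succ_iff.mp (Finset.mem_range.mp hk)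
        have hαk : Even (α - k) := (Nat.even_sub hkα).mpr (iff_of_true heven hke)
        have : (0:ℝ) ≤ (w - x₀) ^ (α - k) := hαk.pow_nonneg _
        have hval : (0:ℝ) ≤ h ^ (k+2) * k / (((k:ℝ)+1) * ((k:ℝ)+2)) := by positivity
        exact mul_nonneg (mul_nonneg (mul_nonneg hB this) (Nat.cast_nonneg _)) hval
      · rw [Iodd k hko, mul_zero]
    have htop := Finset.single_le_sum hnn hmem
    refine le_trans (le_of_eq ?_) htop
    rw [Ieven α heven, Nat.sub_self, pow_zero, Nat.choose_self]
    push_cast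
    ring
  norm_num
  linarith [hsum]
end

section
/- Let φ₀ : ℝ → ℝ be differentiable on ℝ with φ₀' differentiable at x₀, and assume φ₀''(x₀) < 0. Let r > 0, let f₀ = exp ∘ φ₀, and define φ_r(y) = exp(−φ₀(y)/r). Then (r·f₀(x₀)³·|φ_r''(x₀)| / (φ_r(x₀)·24))^{1/5} ≥ (f₀(x₀)³·|φ₀''(x₀)| / 24)^{1/5}, with strict inequality whenever φ₀'(x₀) ≠ 0. Indeed, the left-hand side equals (f₀(x₀)³·φ₀'(x₀)²/(24·r) + f₀(x₀)³·|φ₀''(x₀)|/24)^{1/5}. -/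
/-! Since `φ_r'' = φ_r · (φ₀'² / r² - φ₀'' / r)`, the base of the s-concave constant is that of
the log-concave one plus `f₀³ φ₀'² / (24 r) ≥ 0`, which is positive when `φ₀' ≠ 0`; the claims
follow by monotonicity of `t ↦ t ^ (1/5)`. -/

open Real

theorem deriv_deriv_exp_comp {g : ℝ → ℝ} {x : ℝ} (hg : Differentiable ℝ g)
    (hg' : DifferentiableAt ℝ (deriv g) x) :
    deriv (deriv fun y => exp (g y)) x = exp (g x) * (deriv g x ^ 2 + deriv (deriv g) x) := by
  have hderiv : deriv (fun y => exp (g y)) = fun y => exp (g y) * deriv g y :=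
    funext fun y => deriv_exp (hg y)
  rw [hderiv, deriv_fun_mul (hg x).exp hg', deriv_exp (hg x)]
  ring

theorem deriv_deriv_exp_neg_div {φ : ℝ → ℝ} {x : ℝ} (r : ℝ) (hφ : Differentiable ℝ φ)
    (hφ' : DifferentiableAt ℝ (deriv φ) x) :
    deriv (deriv fun y => exp (-φ y / r)) x =
      exp (-φ x / r) * (deriv φ x ^ 2 / r ^ 2 - deriv (deriv φ) x / r) := by
  have hderiv : deriv (fun y => -φ y / r) = fun y => -deriv φ y / r := by
    funext y
    rw [deriv_div_const, deriv.fun_neg]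
  have hg : Differentiable ℝ fun y => -φ y / r := fun y => (hφ y).neg.div_const r
  have hg' : DifferentiableAt ℝ (deriv fun y => -φ y / r) x := hderiv ▸ hφ'.neg.div_const r
  rw [deriv_deriv_exp_comp hg hg', hderiv, deriv_div_const, deriv.fun_neg]
  ring

/-- Comparison of the s-concave and log-concave constants `d^{(0)}_{2,sc}` and
`d^{(0)}_{2,lc}` for the density value: the s-concave constant is at least the
log-concave one, strictly whenever `φ₀'(x₀) ≠ 0`, with the explicit expression for the
s-concave constant. -/
theorem sc_ge_lc_constant_value
    (φ₀ : ℝ → ℝ) (x₀ r : ℝ) (hr : 0 < r)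
    (hd : Differentiable ℝ φ₀) (hd2 : DifferentiableAt ℝ (deriv φ₀) x₀)
    (hneg : deriv (deriv φ₀) x₀ < 0)
    (f₀ φr : ℝ → ℝ)
    (hf₀ : f₀ = fun y => Real.exp (φ₀ y))
    (hφr : φr = fun y => Real.exp (-φ₀ y / r)) :
    (f₀ x₀ ^ 3 * |deriv (deriv φ₀) x₀| / 24) ^ ((1 : ℝ) / 5) ≤
        (r * f₀ x₀ ^ 3 * |deriv (deriv φr) x₀| / (φr x₀ * 24)) ^ ((1 : ℝ) / 5) ∧
      (deriv φ₀ x₀ ≠ 0 →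
        (f₀ x₀ ^ 3 * |deriv (deriv φ₀) x₀| / 24) ^ ((1 : ℝ) / 5) <
          (r * f₀ x₀ ^ 3 * |deriv (deriv φr) x₀| / (φr x₀ * 24)) ^ ((1 : ℝ) / 5)) ∧
      (r * f₀ x₀ ^ 3 * |deriv (deriv φr) x₀| / (φr x₀ * 24)) ^ ((1 : ℝ) / 5) =
        (f₀ x₀ ^ 3 * (deriv φ₀ x₀) ^ 2 / (24 * r) +
          f₀ x₀ ^ 3 * |deriv (deriv φ₀) x₀| / 24) ^ ((1 : ℝ) / 5) := by
  have hf₀pos : 0 < f₀ x₀ := hf₀ ▸ exp_pos _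
  have hφr'' : |deriv (deriv φr) x₀| =
      φr x₀ * (deriv φ₀ x₀ ^ 2 / r ^ 2 - deriv (deriv φ₀) x₀ / r) := by
    have hcurv : 0 < deriv φ₀ x₀ ^ 2 / r ^ 2 - deriv (deriv φ₀) x₀ / r := by
      have : deriv (deriv φ₀) x₀ / r < 0 := div_neg_of_neg_of_pos hneg hr
      linarith [div_nonneg (sq_nonneg (deriv φ₀ x₀)) (sq_nonneg r)]
    subst hφr
    rw [deriv_deriv_exp_neg_div r hd hd2, abs_of_pos (mul_pos (exp_pos _) hcurv)]
  have hsc : r * f₀ x₀ ^ 3 * |deriv (deriv φr) x₀| / (φr x₀ * 24) =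
      f₀ x₀ ^ 3 * deriv φ₀ x₀ ^ 2 / (24 * r) + f₀ x₀ ^ 3 * |deriv (deriv φ₀) x₀| / 24 := by
    have hφrpos : 0 < φr x₀ := hφr ▸ exp_pos _
    rw [hφr'', abs_of_neg hneg]
    field_simp
    ring
  have hlc : 0 ≤ f₀ x₀ ^ 3 * |deriv (deriv φ₀) x₀| / 24 := by positivity
  rw [hsc]
  refine ⟨rpow_le_rpow hlc (le_add_of_nonneg_left (by positivity)) (by norm_num),
    fun hne => rpow_lt_rpow hlc (lt_add_of_pos_left _ (by positivity)) (by norm_num), rfl⟩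
end

section
/- Let φ₀ : ℝ → ℝ be differentiable on ℝ with φ₀' differentiable at a point m, and assume φ₀'(m) = 0 and φ₀''(m) ≠ 0. Let f₀ = exp ∘ φ₀ and, for r > 0, define φ_r(y) = exp(−φ₀(y)/r). Then for every r > 0, (24²·φ_r(m)² / (r²·f₀(m)·φ_r''(m)²))^{1/5} = (24² / (f₀(m)·φ₀''(m)²))^{1/5}. -/
/-! Since `(exp ∘ ψ)' = (exp ∘ ψ) ψ'`, at a critical point of `ψ` the second derivative of
`exp ∘ ψ` is `exp (ψ m) ψ''(m)`. With `ψ = -φ₀ / r` this gives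
`φ_r''(m) = -φ_r(m) φ₀''(m) / r`, and the factors `φ_r(m)²` and `r²` cancel in the constant. -/

open Real

theorem deriv_deriv_exp_comp_of_deriv_eq_zero {ψ : ℝ → ℝ} {m : ℝ} (hψ : Differentiable ℝ ψ)
    (hψ' : DifferentiableAt ℝ (deriv ψ) m) (hm : deriv ψ m = 0) :
    deriv (deriv fun y => exp (ψ y)) m = exp (ψ m) * deriv (deriv ψ) m := by
  have hderiv : deriv (fun y => exp (ψ y)) = fun y => exp (ψ y) * deriv ψ y :=
    funext fun y => deriv_exp (hψ y)
  rw [hderiv]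
  simpa [hm] using ((hψ m).hasDerivAt.exp.fun_mul hψ'.hasDerivAt).deriv

theorem deriv_neg_div_const (φ : ℝ → ℝ) (r : ℝ) :
    deriv (fun y => -φ y / r) = fun y => -deriv φ y / r := by
  funext y
  rw [deriv_div_const, deriv.fun_neg]

theorem mode_constant_div_cancel (a f x E r : ℝ) (hE : E ≠ 0) (hr : r ≠ 0) :
    a * E ^ 2 / (r ^ 2 * f * (E * (-x / r)) ^ 2) = a / (f * x ^ 2) := by
  have hscale : r ^ 2 * f * (E * (-x / r)) ^ 2 = f * x ^ 2 * E ^ 2 := by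
    field_simp
  rw [hscale, mul_div_mul_right _ _ (pow_ne_zero 2 hE)]

theorem sc_eq_lc_mode_constant_general
    (φ₀ : ℝ → ℝ) (m : ℝ)
    (hd : Differentiable ℝ φ₀) (hd2 : DifferentiableAt ℝ (deriv φ₀) m)
    (hm : deriv φ₀ m = 0)
    (f₀ : ℝ → ℝ) :
    ∀ r : ℝ, 0 < r →
      (24 ^ 2 * (Real.exp (-φ₀ m / r)) ^ 2 /
          (r ^ 2 * f₀ m * (deriv (deriv (fun y => Real.exp (-φ₀ y / r))) m) ^ 2)) ^
        ((1 : ℝ) / 5) =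
        (24 ^ 2 / (f₀ m * (deriv (deriv φ₀) m) ^ 2)) ^ ((1 : ℝ) / 5) := by
  intro r hr
  have hψ : Differentiable ℝ fun y => -φ₀ y / r := hd.neg.div_const r
  have hψ' : DifferentiableAt ℝ (deriv fun y => -φ₀ y / r) m := by
    rw [deriv_neg_div_const]
    exact hd2.neg.div_const r
  have hψm : deriv (fun y => -φ₀ y / r) m = 0 := by simp [hm]
  rw [deriv_deriv_exp_comp_of_deriv_eq_zero hψ hψ' hψm, deriv_neg_div_const,
    deriv_neg_div_const, mode_constant_div_cancel _ _ _ _ _ (exp_ne_zero _) hr.ne']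

/-- At the mode `m` (where `φ₀'(m) = 0`), the s-concave mode constant coincides with the
log-concave mode constant for every `r > 0`. -/
theorem sc_eq_lc_mode_constant
    (φ₀ : ℝ → ℝ) (m : ℝ)
    (hd : Differentiable ℝ φ₀) (hd2 : DifferentiableAt ℝ (deriv φ₀) m)
    (hm : deriv φ₀ m = 0) (hne : deriv (deriv φ₀) m ≠ 0)
    (f₀ : ℝ → ℝ) (hf₀ : f₀ = fun y => Real.exp (φ₀ y)) :
    ∀ r : ℝ, 0 < r →
      (24 ^ 2 * (Real.exp (-φ₀ m / r)) ^ 2 /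
          (r ^ 2 * f₀ m * (deriv (deriv (fun y => Real.exp (-φ₀ y / r))) m) ^ 2)) ^
        ((1 : ℝ) / 5) =
        (24 ^ 2 / (f₀ m * (deriv (deriv φ₀) m) ^ 2)) ^ ((1 : ℝ) / 5) :=
  sc_eq_lc_mode_constant_general φ₀ m hd hd2 hm f₀
end

section
/- For every real K > 0 there exists a real C > 0 such that for every real t ≥ 1, the series ∑_{ℓ=1}^∞ exp(−(t² + 16^{ℓ−1})/(K·8^ℓ)) converges and satisfies ∑_{ℓ=1}^∞ exp(−(t² + 16^{ℓ−1})/(K·8^ℓ)) ≤ C·exp(−√t / C). -/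
/-!
Writing `s = √t` and `p = 2^ℓ`, the exponent is `(s⁴ + p⁴)/(8Kp³)`, which by Young's inequality
`s p³ ≤ s⁴ + p⁴` is at least `(s + p)/(16K) ≥ (s + ℓ)/(16K)`. Each term is therefore bounded by
`exp(-√t/(16K)) rᶫ` with `r = exp(-1/(16K)) < 1`, and summing the geometric series gives the claim
with `C = 16K + 1/(1 - r)`.
-/

open Real

theorem mul_pow_three_le_pow_four_add_pow_four (s p : ℝ) : s * p ^ 3 ≤ s ^ 4 + p ^ 4 := by
  nlinarith [sq_nonneg (s - p), sq_nonneg (s + p), sq_nonneg (s ^ 2 - p ^ 2),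
    sq_nonneg (s ^ 2 - s * p), sq_nonneg (p ^ 2 - s * p), sq_nonneg (s * p)]

theorem add_div_sixteen_le_pow_four_add_pow_four_div {p : ℝ} (hp : 0 < p) (s : ℝ) :
    (s + p) / 16 ≤ (s ^ 4 + p ^ 4) / (8 * p ^ 3) := by
  rw [div_le_div_iff₀ (by norm_num) (by positivity)]
  nlinarith [mul_pow_three_le_pow_four_add_pow_four s p, sq_nonneg (s ^ 2)]

theorem summable_and_tsum_le_of_le_geometric {f : ℕ → ℝ} {c r : ℝ} (hf₀ : ∀ n, 0 ≤ f n)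
    (hf : ∀ n, f n ≤ c * r ^ n) (hr₀ : 0 ≤ r) (hr₁ : r < 1) :
    Summable f ∧ ∑' n, f n ≤ c * (1 - r)⁻¹ := by
  have hgeom : Summable (fun n => c * r ^ n) :=
    (summable_geometric_of_lt_one hr₀ hr₁).mul_left c
  have hsum : Summable f := hgeom.of_nonneg_of_le hf₀ hf
  refine ⟨hsum, ?_⟩
  calc ∑' n, f n ≤ ∑' n, c * r ^ n := hsum.tsum_le_tsum hf hgeom
    _ = c * (1 - r)⁻¹ := by rw [tsum_mul_left, tsum_geometric_of_lt_one hr₀ hr₁]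

theorem exp_dyadic_term_le {K : ℝ} (hK : 0 < K) {t : ℝ} (ht : 0 ≤ t) (ℓ : ℕ) :
    exp (-(t ^ 2 + 16 ^ ℓ) / (K * 8 ^ (ℓ + 1))) ≤
      exp (-√t / (16 * K)) * exp (-1 / (16 * K)) ^ ℓ := by
  have hexponent : (√t + ℓ) / (16 * K) ≤ (t ^ 2 + 16 ^ ℓ) / (K * 8 ^ (ℓ + 1)) :=
    calc (√t + ℓ) / (16 * K) ≤ ((√t + 2 ^ ℓ) / 16) / K := by
          rw [div_div]
          gcongr
          exact_mod_cast Nat.lt_two_pow_self.le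
      _ ≤ ((√t ^ 4 + (2 ^ ℓ) ^ 4) / (8 * (2 ^ ℓ) ^ 3)) / K := by
          gcongr ?_ / K
          exact add_div_sixteen_le_pow_four_add_pow_four_div (by positivity) _
      _ = (t ^ 2 + 16 ^ ℓ) / (K * 8 ^ (ℓ + 1)) := by
          rw [show √t ^ 4 = t ^ 2 by rw [show 4 = 2 * 2 by rfl, pow_mul, sq_sqrt ht]]
          rw [← pow_mul, ← pow_mul, mul_comm _ 4, mul_comm _ 3, pow_mul, pow_mul, div_div]
          ring
  calc exp (-(t ^ 2 + 16 ^ ℓ) / (K * 8 ^ (ℓ + 1))) ≤ exp (-(√t + ℓ) / (16 * K)) := by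
        rw [exp_le_exp, neg_div, neg_div, neg_le_neg_iff]
        exact hexponent
    _ = exp (-√t / (16 * K)) * exp (-1 / (16 * K)) ^ ℓ := by
        rw [← exp_nat_mul, ← exp_add]
        ring_nf

theorem exp_neg_div_mul_le_add_mul_exp_neg_div {a b x : ℝ} (ha : 0 < a) (hb : 0 ≤ b)
    (hx : 0 ≤ x) : exp (-x / a) * b ≤ (a + b) * exp (-x / (a + b)) := by
  rw [mul_comm]
  refine mul_le_mul (by linarith) ?_ (exp_pos _).le (by positivity)
  rw [exp_le_exp, neg_div, neg_div, neg_le_neg_iff]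
  gcongr
  linarith

/-- Summation estimate: for every `K > 0` there is `C > 0` such that for all `t ≥ 1`,
`∑_{ℓ=1}^∞ exp(-(t² + 16^{ℓ-1})/(K 8^ℓ)) ≤ C exp(-√t / C)` (and the series converges). -/
theorem dyadic_tail_sum_bound (K : ℝ) (hK : 0 < K) :
    ∃ C : ℝ, 0 < C ∧ ∀ t : ℝ, 1 ≤ t →
      Summable (fun ℓ : ℕ => Real.exp (-(t ^ 2 + 16 ^ ℓ) / (K * 8 ^ (ℓ + 1)))) ∧
        (∑' ℓ : ℕ, Real.exp (-(t ^ 2 + 16 ^ ℓ) / (K * 8 ^ (ℓ + 1)))) ≤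
          C * Real.exp (-Real.sqrt t / C) := by
  set r := exp (-1 / (16 * K))
  have hr₁ : r < 1 := exp_lt_one_iff.2 (by rw [neg_div]; exact neg_neg_of_pos (by positivity))
  have hr : 0 < (1 - r)⁻¹ := inv_pos.2 (sub_pos.2 hr₁)
  refine ⟨16 * K + (1 - r)⁻¹, by positivity, fun t ht => ?_⟩
  obtain ⟨hsum, hle⟩ := summable_and_tsum_le_of_le_geometric (fun _ => (exp_pos _).le)
    (exp_dyadic_term_le hK (by linarith)) (exp_pos _).le hr₁
  refine ⟨hsum, hle.trans ?_⟩
  exact exp_neg_div_mul_le_add_mul_exp_neg_div (by positivity) hr.le (sqrt_nonneg t)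
end
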